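/- Let $\sigma:\mathbb{R}\to\mathbb{R}$ be a function and suppose that for some constant $V<\infty$, for every finite increasing sequence $x_0 < x_1 < \cdots < x_N$ one has $\sum_{k=1}^{N-1}\left|\frac{\sigma(x_{k+1})-\sigma(x_k)}{x_{k+1}-x_k}-\frac{\sigma(x_k)-\sigma(x_{k-1})}{x_k-x_{k-1}}\right| \le V$, and that $\sigma$ is Lipschitz. Then the right derivative of $\sigma$ exists at every point $x_0\in\mathbb{R}$, i.e. $\lim_{h\to 0^+}\frac{\sigma(x_0+h)-\sigma(x_0)}{h}$ exists and is finite. -/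

import Mathlib

/-!
Let `s x` be the slope of the chord of `σ` from `a` to `x`. If `s` had no limit as `x ↓ a`, it
would oscillate by some `ε > 0` in every right neighbourhood of `a`. One then picks
`t₀ > t₁ > ⋯ > a` with `|s tₘ₊₁ - s tₘ| ≥ ε`, each `tₘ₊₂` so close to `a` (continuity of `σ`)
that the slope on `[tₘ₊₂, tₘ₊₁]` is within `ε / 2` of `s tₘ₊₁`. As `s tₘ` is a convex combination
of `s tₘ₊₁` and the slope on `[tₘ₊₁, tₘ]`, the slope jumps by at least `ε / 2` at every `tₘ₊₁`,
and `N` such jumps give `N * ε / 2 ≤ V` for all `N`.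
-/

open Filter Set Topology

def BoundedSlopeVariation (σ : ℝ → ℝ) (V : ℝ) : Prop :=
  ∀ (N : ℕ) (x : ℕ → ℝ), StrictMono x →
    ∑ k ∈ Finset.range N, |slope σ (x (k + 1)) (x (k + 2)) - slope σ (x k) (x (k + 1))| ≤ V

lemma exists_frequently_le_dist_of_not_tendsto {α β : Type*} [PseudoMetricSpace β]
    [CompleteSpace β] {l : Filter α} [l.NeBot] {f : α → β} (h : ¬∃ L, Tendsto f l (𝓝 L)) :
    ∃ ε > 0, ∀ y, ∃ᶠ x in l, ε ≤ dist (f x) y := by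
  contrapose! h
  rw [← cauchy_map_iff_exists_tendsto, Metric.cauchy_iff]
  refine ⟨map_neBot, fun ε hε => ?_⟩
  obtain ⟨y, hy⟩ := h (ε / 2) (half_pos hε)
  refine ⟨Metric.ball y (ε / 2), hy, fun u hu v hv => ?_⟩
  rw [Metric.mem_ball] at hu hv
  linarith [dist_triangle_right u v y]

lemma abs_slope_sub_slope_le {σ : ℝ → ℝ} {a x y : ℝ} (hax : a < x) (hxy : x < y) :
    |slope σ a y - slope σ a x| ≤ |slope σ x y - slope σ a x| := by
  have hcomb := sub_div_sub_smul_slope_add_sub_div_sub_smul_slope σ a x y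
  simp only [smul_eq_mul] at hcomb
  have hya : 0 < y - a := by linarith
  have key : slope σ a y - slope σ a x = (y - x) / (y - a) * (slope σ x y - slope σ a x) := by
    rw [← hcomb]; field_simp; ring
  rw [key, abs_mul]
  refine mul_le_of_le_one_left (abs_nonneg _) ?_
  rw [abs_of_pos (div_pos (by linarith) hya), div_le_one hya]
  linarith

namespace BoundedSlopeVariation

variable {σ : ℝ → ℝ} {V : ℝ}

lemma sum_le_of_strictMonoOn (h : BoundedSlopeVariation σ V) {N : ℕ} {x : ℕ → ℝ}
    (hx : StrictMonoOn x (Iic (N + 1))) :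
    ∑ k ∈ Finset.range N, |slope σ (x (k + 1)) (x (k + 2)) - slope σ (x k) (x (k + 1))| ≤ V := by
  set y : ℕ → ℝ := fun j => x (min j (N + 1)) + (j - (N + 1) : ℕ)
  have hyx : ∀ j ≤ N + 1, y j = x j := fun j hj => by
    simp [y, min_eq_left hj, Nat.sub_eq_zero_of_le hj]
  have hmono : StrictMono y := by
    refine strictMono_nat_of_lt_succ fun j => ?_
    rcases lt_or_ge j (N + 1) with hj | hj
    · rw [hyx j hj.le, hyx (j + 1) hj]
      exact hx (mem_Iic.2 hj.le) (mem_Iic.2 hj) j.lt_succ_self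
    · simp only [y, min_eq_right hj, min_eq_right (hj.trans j.le_succ),
        show j + 1 - (N + 1) = j - (N + 1) + 1 by omega]
      push_cast
      linarith
  calc _ = ∑ k ∈ Finset.range N, |slope σ (y (k + 1)) (y (k + 2)) - slope σ (y k) (y (k + 1))| := by
        refine Finset.sum_congr rfl fun k hk => ?_
        have hk := Finset.mem_range.1 hk
        rw [hyx k (by omega), hyx (k + 1) (by omega), hyx (k + 2) (by omega)]
    _ ≤ V := h N y hmono

lemma mul_le_of_strictAnti (h : BoundedSlopeVariation σ V) {t : ℕ → ℝ} (ht : StrictAnti t)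
    {δ : ℝ} (hjump : ∀ m, δ ≤ |slope σ (t (m + 1)) (t m) - slope σ (t (m + 2)) (t (m + 1))|)
    (N : ℕ) : N * δ ≤ V := by
  have hmono : StrictMonoOn (fun j => t (N + 1 - j)) (Iic (N + 1)) :=
    fun i hi j hj hij => ht (by simp only [mem_Iic] at hi hj; omega)
  refine le_trans ?_ (h.sum_le_of_strictMonoOn hmono)
  simpa using Finset.card_nsmul_le_sum (Finset.range N) _ δ fun k hk => by
    obtain ⟨m, rfl⟩ : ∃ m, N = k + m + 1 := ⟨N - k - 1, by simp at hk; omega⟩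
    convert hjump m using 4 <;> congr 1 <;> omega

end BoundedSlopeVariation

lemma exists_far_slope_with_close_chord {σ : ℝ → ℝ} {a ε : ℝ}
    (hσ : ContinuousWithinAt σ (Ioi a) a) (hε : 0 < ε)
    (hosc : ∀ y, ∃ᶠ c in 𝓝[>] a, ε ≤ |slope σ a c - y|)
    {x : ℝ} (hx : a < x) :
    ∃ c, a < c ∧ c < x ∧ ε ≤ |slope σ a c - slope σ a x| ∧
      |slope σ c x - slope σ a x| ≤ ε / 2 := by
  have hcont : Tendsto (fun c => slope σ c x) (𝓝[>] a) (𝓝 (slope σ a x)) := by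
    simp only [slope_def_field]
    exact (tendsto_const_nhds.sub hσ).div
      (tendsto_const_nhds.sub (tendsto_nhdsWithin_of_tendsto_nhds tendsto_id))
      (sub_ne_zero.2 hx.ne')
  have hnear : ∀ᶠ c in 𝓝[>] a, c ∈ Ioo a x ∧ |slope σ c x - slope σ a x| ≤ ε / 2 :=
    Eventually.and (Ioo_mem_nhdsGT hx)
      (hcont.eventually (Metric.closedBall_mem_nhds _ (half_pos hε)))
  obtain ⟨c, hfar, ⟨hac, hcx⟩, hclose⟩ := ((hosc (slope σ a x)).and_eventually hnear).exists
  exact ⟨c, hac, hcx, hfar, hclose⟩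

theorem BoundedSlopeVariation.exists_tendsto_slope {σ : ℝ → ℝ} {V a : ℝ}
    (h : BoundedSlopeVariation σ V) (hσ : ContinuousWithinAt σ (Ioi a) a) :
    ∃ L, Tendsto (slope σ a) (𝓝[>] a) (𝓝 L) := by
  by_contra hlim
  obtain ⟨ε, hε, hosc⟩ := exists_frequently_le_dist_of_not_tendsto hlim
  simp only [Real.dist_eq] at hosc
  choose! next hnext using fun x (hx : a < x) => exists_far_slope_with_close_chord hσ hε hosc hx
  set t : ℕ → ℝ := fun n => next^[n] (a + 1)
  have hsucc : ∀ n, t (n + 1) = next (t n) := fun n => Function.iterate_succ_apply' _ _ _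
  have hta : ∀ n, a < t n := by
    intro n
    induction n with
    | zero => simp [t]
    | succ n ih => rw [hsucc]; exact (hnext _ ih).1
  have hjump : ∀ m, ε / 2 ≤ |slope σ (t (m + 1)) (t m) - slope σ (t (m + 2)) (t (m + 1))| := by
    intro m
    obtain ⟨-, hlt, hfar, -⟩ := hnext _ (hta m)
    obtain ⟨-, -, -, hclose⟩ := hnext _ (hta (m + 1))
    rw [← hsucc] at hlt hfar hclose
    have hchord := abs_slope_sub_slope_le (σ := σ) (hta (m + 1)) hlt
    rw [abs_sub_comm] at hfar
    linarith [abs_sub_le (slope σ (t (m + 1)) (t m)) (slope σ (t (m + 2)) (t (m + 1)))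
      (slope σ a (t (m + 1)))]
  have hanti : StrictAnti t := strictAnti_nat_of_succ_lt fun n => hsucc n ▸ (hnext _ (hta n)).2.1
  obtain ⟨N, hN⟩ := exists_nat_gt (V / (ε / 2))
  rw [div_lt_iff₀ (half_pos hε)] at hN
  linarith [h.mul_le_of_strictAnti hanti hjump N]

theorem stmt5 (σ : ℝ → ℝ) (V : ℝ)
    (hBV : ∀ (N : ℕ) (x : ℕ → ℝ), StrictMono x →
      ∑ k ∈ Finset.range N,
        |(σ (x (k + 2)) - σ (x (k + 1))) / (x (k + 2) - x (k + 1))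
          - (σ (x (k + 1)) - σ (x k)) / (x (k + 1) - x k)| ≤ V)
    (C : NNReal) (hLip : LipschitzWith C σ) :
    ∀ x₀ : ℝ, ∃ L : ℝ,
      Tendsto (fun h : ℝ => (σ (x₀ + h) - σ x₀) / h)
        (nhdsWithin 0 (Set.Ioi 0)) (nhds L) := by
  intro x₀
  have hσ : BoundedSlopeVariation σ V := by
    simpa only [BoundedSlopeVariation, slope_def_field] using hBV
  obtain ⟨L, hL⟩ := hσ.exists_tendsto_slope hLip.continuous.continuousWithinAt (a := x₀)
  have hshift : Tendsto (x₀ + ·) (𝓝[>] 0) (𝓝[>] x₀) := by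
    have := (map_add_left_nhdsGT (c := x₀) (a := (0 : ℝ))).le
    rwa [add_zero] at this
  refine ⟨L, (hL.comp hshift).congr fun h => ?_⟩
  simp [slope_def_field]
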